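/- arXiv:1608.04916 — 8 statements merged into one kernel-verified Lean document; each statement's English description precedes it below -/
import Mathlib

section
/- Let A be a finite set of integers with min(A) = 0 and gcd of the elements of A equal to 1 (A is in normal form). If A is a stable set, i.e. 2A ∩ [0, max(A)] = A and neither 1 nor max(A)−1 belongs to A, then for every x with 0 ≤ x ≤ max(A), the number of elements of A in [0,x] is at most ⌈(x+1)/2⌉. -/
/-!
If `m ≤ max A` is not in `A`, then `s ↦ m - s` maps `A ∩ [0, m]` into the complement of `A` in
`[0, m]`, because `s, m - s ∈ A` would put `m` in `A`; so `2 |A ∩ [0, m]| ≤ m + 1` at every gap `m`.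
The quantity `2 |A ∩ [0, x]| - x` drops by one from `x` to `x - 1` when `x ∈ A`, and is at most `1`
at a gap. Since `max A - 1` is a gap, it is at most `2` at `max A`, and downward induction bounds
it by `2` on all of `[0, max A]`; as the count is an integer, this is the ceiling bound.
-/

open Finset Pointwise

def IsAddClosedUpTo (A : Finset ℤ) (a : ℤ) : Prop :=
  ∀ s ∈ A, ∀ t ∈ A, 0 ≤ s → 0 ≤ t → s + t ≤ a → s + t ∈ A

theorem isAddClosedUpTo_of_add_inter_Icc_eq {A : Finset ℤ} {a : ℤ}
    (h : (A + A) ∩ Icc 0 a = A) : IsAddClosedUpTo A a := by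
  intro s hs t ht hs0 ht0 hst
  rw [← h]
  exact mem_inter.2 ⟨add_mem_add hs ht, mem_Icc.2 ⟨by omega, hst⟩⟩

theorem two_mul_card_le_card_Icc_of_add_ne {B : Finset ℤ} {m : ℤ} (hB : B ⊆ Icc 0 m)
    (h : ∀ s ∈ B, ∀ t ∈ B, s + t ≠ m) : 2 * #B ≤ #(Icc 0 m) := by
  have hreflect : B.image (m - ·) ⊆ Icc 0 m := by
    simp only [image_subset_iff, mem_Icc]
    intro s hs
    have := mem_Icc.1 (hB hs)
    omega
  have hdisj : Disjoint B (B.image (m - ·)) := by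
    simp only [disjoint_left, mem_image, not_exists, not_and]
    intro t ht s hs hst
    exact h t ht s hs (by omega)
  calc 2 * #B = #B + #(B.image (m - ·)) := by
        rw [card_image_of_injective _ sub_right_injective, two_mul]
    _ = #(B ∪ B.image (m - ·)) := (card_union_of_disjoint hdisj).symm
    _ ≤ #(Icc 0 m) := card_le_card (union_subset hB hreflect)

section

variable {A : Finset ℤ} {a : ℤ}

theorem two_mul_card_inter_Icc_le_of_notMem (hA : IsAddClosedUpTo A a) {m : ℤ} (hm : -1 ≤ m)
    (hma : m ≤ a) (hmA : m ∉ A) : 2 * (#(A ∩ Icc 0 m) : ℤ) ≤ m + 1 := by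
  have := two_mul_card_le_card_Icc_of_add_ne (B := A ∩ Icc 0 m) inter_subset_right
    fun s hs t ht hst ↦ by
      obtain ⟨hsA, hs⟩ := mem_inter.1 hs
      obtain ⟨htA, ht⟩ := mem_inter.1 ht
      rw [mem_Icc] at hs ht
      exact hmA (hst ▸ hA s hsA t htA hs.1 ht.1 (by omega))
  rw [Int.card_Icc] at this
  omega

theorem card_inter_Icc_of_mem {y : ℤ} (hy : y ∈ A) (hy0 : 0 ≤ y) :
    #(A ∩ Icc 0 y) = #(A ∩ Icc 0 (y - 1)) + 1 := by
  rw [← insert_Icc_sub_one_right_eq_Icc hy0, inter_insert_of_mem hy,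
    card_insert_of_notMem (by simp)]

theorem two_mul_card_inter_Icc_le (hA : IsAddClosedUpTo A a) (haA : a ∈ A) (ha1 : a - 1 ∉ A)
    {x : ℤ} (hx0 : 0 ≤ x) (hxa : x ≤ a) : 2 * (#(A ∩ Icc 0 x) : ℤ) ≤ x + 2 := by
  induction x, hxa using Int.leInductionDown with
  | base =>
    have := two_mul_card_inter_Icc_le_of_notMem hA (by omega) (by omega) ha1
    rw [card_inter_Icc_of_mem haA hx0]
    push_cast
    omega
  | pred n hna ih =>
    by_cases hn : n ∈ A
    · have := card_inter_Icc_of_mem hn (by omega)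
      have := ih (by omega)
      omega
    · have hgap := two_mul_card_inter_Icc_le_of_notMem hA (by omega) hna hn
      have : #(A ∩ Icc 0 (n - 1)) ≤ #(A ∩ Icc 0 n) :=
        card_le_card (inter_subset_inter_left (Icc_subset_Icc le_rfl (by omega)))
      omega

end

theorem le_ceil_add_one_div_two_of_two_mul_le {K : Type*} [Field K] [LinearOrder K]
    [IsStrictOrderedRing K] [FloorRing K] {n x : ℤ} (h : 2 * n ≤ x + 2) :
    n ≤ ⌈((x : K) + 1) / 2⌉ := by
  rw [Int.le_ceil_iff, lt_div_iff₀ two_pos]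
  exact_mod_cast (by omega : (n - 1) * 2 < x + 1)

theorem stable_initial_segment_density_general
    (A : Finset ℤ) (a : ℤ)
    (ha : IsGreatest (A : Set ℤ) a)
    (hstable : (A + A) ∩ Finset.Icc 0 a = A)
    (h2 : a - 1 ∉ A) :
    ∀ x : ℤ, 0 ≤ x → x ≤ a →
      ((A ∩ Finset.Icc 0 x).card : ℤ) ≤ ⌈((x : ℚ) + 1) / 2⌉ := by
  intro x hx0 hxa
  exact le_ceil_add_one_div_two_of_two_mul_le <|
    two_mul_card_inter_Icc_le (isAddClosedUpTo_of_add_inter_Icc_eq hstable) ha.1 h2 hx0 hxa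

/-- If `A` is a stable set in normal form, then for every `x` with
`0 ≤ x ≤ max A`, the number of elements of `A` in `[0,x]` is at most `⌈(x+1)/2⌉`. -/
theorem stable_initial_segment_density
    (A : Finset ℤ) (a : ℤ)
    (h0 : 0 ∈ A) (hnn : ∀ y ∈ A, 0 ≤ y) (hgcd : A.gcd id = 1)
    (ha : IsGreatest (A : Set ℤ) a)
    (hstable : (A + A) ∩ Finset.Icc 0 a = A)
    (h1 : (1 : ℤ) ∉ A) (h2 : a - 1 ∉ A) :
    ∀ x : ℤ, 0 ≤ x → x ≤ a →
      ((A ∩ Finset.Icc 0 x).card : ℤ) ≤ ⌈((x : ℚ) + 1) / 2⌉ :=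
  stable_initial_segment_density_general A a ha hstable h2
end

section
/- Let A be a finite set of integers with |A| = k and let x > max(A). Suppose that x is involved in an additive relation with elements of A, i.e., a + x = a' + a'' for some a, a', a'' ∈ A. Then 2 ≤ |2(A ∪ {x})| − |2A| ≤ k. -/
/-!
Adjoining `x` to `A` adds to `2A` the translate `x + A` and the new maximum `2x`, so
`|2(A ∪ {x})| − |2A| = |(x + A) \ 2A| + 1`. The translate has `k` elements, of which
`x + max A` exceeds every element of `2A`, while the additive relation puts `x + a` inside `2A`;
hence `1 ≤ |(x + A) \ 2A| ≤ k − 1`.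
-/

open Finset Pointwise

namespace Finset

variable {α : Type*} [DecidableEq α]

lemma insert_add_insert_self [AddCommSemigroup α] (x : α) (A : Finset α) :
    insert x A + insert x A = insert (x + x) ({x} + A ∪ (A + A)) := by
  rw [insert_eq, union_add, add_union, add_union, singleton_add_singleton, add_comm A {x},
    insert_eq, union_assoc, union_left_idem]

section LinearOrdered

variable [AddCommMonoid α] [LinearOrder α] [IsOrderedCancelAddMonoid α] {A : Finset α} {x : α}

lemma add_self_notMem_singleton_add_union_add (hx : ∀ a ∈ A, a < x) :
    x + x ∉ {x} + A ∪ (A + A) := by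
  simp only [mem_union, mem_add, mem_singleton, not_or, not_exists, not_and]
  refine ⟨?_, fun a ha b hb hab => (add_lt_add (hx a ha) (hx b hb)).ne hab⟩
  rintro _ rfl b hb hxb
  exact (add_lt_add_right (hx b hb) _).ne hxb

lemma card_insert_add_insert_self (hx : ∀ a ∈ A, a < x) :
    #(insert x A + insert x A) = #(A + A) + #(({x} + A) \ (A + A)) + 1 := by
  rw [insert_add_insert_self, card_insert_of_notMem (add_self_notMem_singleton_add_union_add hx),
    ← card_sdiff_add_card, add_comm #(A + A)]

lemma add_max'_notMem_add (hA : A.Nonempty) (hx : A.max' hA < x) :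
    x + A.max' hA ∉ A + A := by
  simp only [mem_add, not_exists, not_and]
  intro a ha b hb hab
  exact ((add_le_add (A.le_max' a ha) (A.le_max' b hb)).trans_lt (add_lt_add_left hx _)).ne hab

lemma singleton_add_sdiff_add_nonempty (hA : A.Nonempty) (hx : ∀ a ∈ A, a < x) :
    (({x} + A) \ (A + A)).Nonempty :=
  ⟨x + A.max' hA, mem_sdiff.2
    ⟨add_mem_add (mem_singleton_self x) (A.max'_mem hA),
      add_max'_notMem_add hA (hx _ (A.max'_mem hA))⟩⟩

end LinearOrdered

lemma card_singleton_add_sdiff_lt [Add α] [IsLeftCancelAdd α] {A B : Finset α} {x : α}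
    (h : ∃ a ∈ A, x + a ∈ B) : #(({x} + A) \ B) < #A := by
  obtain ⟨a, ha, hxa⟩ := h
  have hinter : 0 < #(({x} + A) ∩ B) :=
    card_pos.2 ⟨x + a, mem_inter.2 ⟨add_mem_add (mem_singleton_self x) ha, hxa⟩⟩
  have hsplit : #(({x} + A) \ B) + #(({x} + A) ∩ B) = #A := by
    rw [card_sdiff_add_card_inter, card_singleton_add]
  omega

end Finset

/-- If `|A| = k`, `x > max A` and `x` is involved in an additive
relation `a + x = a' + a''` with elements of `A`, then
`2 ≤ |2(A ∪ {x})| − |2A| ≤ k`. -/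
theorem doubling_increment_bounds
    (A : Finset ℤ) (k : ℕ) (hk : A.card = k) (x : ℤ) (hx : ∀ a ∈ A, a < x)
    (hrel : ∃ a ∈ A, ∃ a' ∈ A, ∃ a'' ∈ A, a + x = a' + a'') :
    2 ≤ (((insert x A) + (insert x A)).card : ℤ) - ((A + A).card : ℤ) ∧
      (((insert x A) + (insert x A)).card : ℤ) - ((A + A).card : ℤ) ≤ (k : ℤ) := by
  obtain ⟨a, ha, a', ha', a'', ha'', hrel⟩ := hrel
  have hnew := (singleton_add_sdiff_add_nonempty ⟨a, ha⟩ hx).card_pos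
  have hold : #(({x} + A) \ (A + A)) < #A :=
    card_singleton_add_sdiff_lt ⟨a, ha, by rw [add_comm x a, hrel]; exact add_mem_add ha' ha''⟩
  rw [card_insert_add_insert_self hx]
  omega
end

section
/- Let A be a finite set of integers in normal form with |A| = k, and let x be an odd integer with x ∈ 2A \ A. Let C = (2·A) ∪ {x}, where 2·A = {2a : a ∈ A}. Then |2C| = |2A| + k. -/
open Finset Pointwise

/-!
Write `D = 2·A`. Every sum of `C = D ∪ {x}` lies in `2D` or in `x + D`, except `x + x`, which lies
in `2·(2A) = 2D` because `x ∈ 2A`. So `2C = 2D ∪ (x + D)`; the sums in `2D` are even and those in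
`x + D` are odd, so the union is disjoint and has `|2A| + |A|` elements.
-/

namespace Finset

theorem insert_add_insert_self_of_add_mem {α : Type*} [AddCommSemigroup α] [DecidableEq α]
    {s : Finset α} {x : α} (hx : x + x ∈ s + s) :
    insert x s + insert x s = (s + s) ∪ (x +ᵥ s) := by
  ext z
  simp only [mem_add, mem_insert, mem_union, mem_vadd_finset, vadd_eq_add]
  constructor
  · rintro ⟨a, rfl | ha, b, rfl | hb, rfl⟩
    · exact Or.inl (mem_add.mp hx)
    · exact Or.inr ⟨b, hb, rfl⟩
    · exact Or.inr ⟨a, ha, add_comm _ _⟩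
    · exact Or.inl ⟨a, ha, b, hb, rfl⟩
  · rintro (⟨a, ha, b, hb, rfl⟩ | ⟨b, hb, rfl⟩)
    · exact ⟨a, Or.inr ha, b, Or.inr hb, rfl⟩
    · exact ⟨x, Or.inl rfl, b, Or.inr hb, rfl⟩

theorem disjoint_image_two_mul_vadd_image_two_mul {x : ℤ} (hx : Odd x) (s t : Finset ℤ) :
    Disjoint (s.image (2 * ·)) (x +ᵥ t.image (2 * ·)) := by
  rw [disjoint_left]
  intro _ hs ht
  obtain ⟨a, -, rfl⟩ := mem_image.mp hs
  obtain ⟨_, hb, h⟩ := mem_vadd_finset.mp ht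
  obtain ⟨b, -, rfl⟩ := mem_image.mp hb
  obtain ⟨m, rfl⟩ := hx
  simp only [vadd_eq_add] at h
  omega

end Finset

theorem card_sumset_Dx_general
    (A : Finset ℤ) (k : ℕ)
    (hk : A.card = k) (x : ℤ) (hodd : Odd x) (hx2A : x ∈ A + A) :
    ((insert x (A.image (fun a => 2 * a))) + (insert x (A.image (fun a => 2 * a)))).card
      = (A + A).card + k := by
  set D := A.image (2 * ·)
  have hDD : D + D = (A + A).image (2 * ·) := (image_add (AddMonoidHom.mulLeft (2 : ℤ))).symm
  have hxx : x + x ∈ D + D := by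
    rw [hDD, ← two_mul]
    exact mem_image_of_mem _ hx2A
  have hdouble : Function.Injective (2 * · : ℤ → ℤ) := mul_right_injective₀ two_ne_zero
  rw [insert_add_insert_self_of_add_mem hxx,
    card_union_of_disjoint (hDD ▸ disjoint_image_two_mul_vadd_image_two_mul hodd _ _),
    card_vadd_finset, hDD, card_image_of_injective _ hdouble,
    card_image_of_injective _ hdouble, hk]

/-- For a set `A` of integers in normal form with `|A| = k` and an
odd `x ∈ 2A \ A`, the set `C = (2·A) ∪ {x}` satisfies `|2C| = |2A| + k`. -/
theorem card_sumset_Dx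
    (A : Finset ℤ) (k : ℕ)
    (h0 : 0 ∈ A) (hnn : ∀ y ∈ A, 0 ≤ y) (hgcd : A.gcd id = 1)
    (hk : A.card = k) (x : ℤ) (hodd : Odd x) (hx2A : x ∈ A + A) (hxA : x ∉ A) :
    ((insert x (A.image (fun a => 2 * a))) + (insert x (A.image (fun a => 2 * a)))).card
      = (A + A).card + k :=
  card_sumset_Dx_general A k hk x hodd hx2A
end

section
/- For each k ≥ 4 and each T with 2k−1 ≤ T ≤ C(k,2)+2, there exists a finite set A of integers in normal form with |A| = k, |2A| = T, and max(A) = μ(k,T), where μ(k,T) = 2^{c(k,T)−2}(k − c(k,T) + b(k,T) + 1). -/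
/-!
Start from `B = {0, 1, …, s - 1} ∪ {s + b}` with `s = k - c + 1`; for `b ≤ s - 2` its sumset is
`{0, …, 2s + b - 1} ∪ {2s + 2b}`, of size `2s + b + 1`. Then apply `c - 2` times
`D X = X ∪ {2 max X}`. For `X ⊆ [0, M]` with `0, M ∈ X`, the new sums of `D X` are `X + 2M`,
which meets `2X ⊆ [0, 2M]` only in `2M = 0 + 2M = M + M`, and `4M`; so `D` adds exactly `|X|`
sums. After `j = c - 2` steps the set has `k` elements, maximum `2^j (s + b) = μ(k, T)` and
`2s + b + 1 + j(s + 1) + C(j, 2) = T` sums, and it contains `0` and `1`.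
-/

open Finset Pointwise

theorem Finset.gcd_id_eq_one_of_one_mem {α : Type*} [CommMonoidWithZero α]
    [NormalizedGCDMonoid α] {s : Finset α} (h : 1 ∈ s) : s.gcd id = 1 := by
  rw [← normalize_gcd, normalize_eq_one]
  exact isUnit_of_dvd_one (gcd_dvd h)

theorem Finset.insert_add_insert_self_s7 {α : Type*} [AddCommMonoid α] [DecidableEq α]
    (a : α) (s : Finset α) :
    insert a s + insert a s = insert (a + a) (s + s ∪ s.image (· + a)) := by
  ext x
  simp only [mem_add, mem_insert, mem_union, mem_image]
  constructor
  · rintro ⟨y, rfl | hy, z, rfl | hz, rfl⟩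
    · exact Or.inl rfl
    · exact Or.inr (Or.inr ⟨z, hz, add_comm _ _⟩)
    · exact Or.inr (Or.inr ⟨y, hy, rfl⟩)
    · exact Or.inr (Or.inl ⟨y, hy, z, hz, rfl⟩)
  · rintro (rfl | ⟨y, hy, z, hz, rfl⟩ | ⟨y, hy, rfl⟩)
    · exact ⟨a, Or.inl rfl, a, Or.inl rfl, rfl⟩
    · exact ⟨y, Or.inr hy, z, Or.inr hz, rfl⟩
    · exact ⟨y, Or.inr hy, a, Or.inl rfl, rfl⟩

section DoublingStep

variable {A : Finset ℤ} {M : ℤ}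

theorem le_two_mul_of_mem_add_self (hM : IsGreatest (A : Set ℤ) M) {u : ℤ} (hu : u ∈ A + A) :
    u ≤ 2 * M := by
  obtain ⟨y, hy, z, hz, rfl⟩ := mem_add.mp hu
  linarith [hM.2 hy, hM.2 hz]

theorem add_self_inter_image_add_two_mul (h0 : 0 ∈ A) (hA : ∀ x ∈ A, 0 ≤ x)
    (hM : IsGreatest (A : Set ℤ) M) : (A + A) ∩ A.image (· + 2 * M) = {2 * M} := by
  ext u
  simp only [mem_inter, mem_image, mem_singleton]
  constructor
  · rintro ⟨hu, x, hx, rfl⟩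
    linarith [le_two_mul_of_mem_add_self hM hu, hA x hx]
  · rintro rfl
    exact ⟨mem_add.mpr ⟨M, hM.1, M, hM.1, by ring⟩, 0, h0, by ring⟩

theorem card_add_self_insert_two_mul (h0 : 0 ∈ A) (hA : ∀ x ∈ A, 0 ≤ x)
    (hM : IsGreatest (A : Set ℤ) M) (hM0 : 0 < M) :
    #(insert (2 * M) A + insert (2 * M) A) = #(A + A) + #A := by
  have hnew : 2 * M + 2 * M ∉ A + A ∪ A.image (· + 2 * M) := by
    simp only [mem_union, mem_image, not_or, not_exists, not_and]
    refine ⟨fun hu ↦ ?_, fun x hx ↦ ?_⟩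
    · linarith [le_two_mul_of_mem_add_self hM hu]
    · linarith [hM.2 hx]
  have hunion := card_union_add_card_inter (A + A) (A.image (· + 2 * M))
  rw [add_self_inter_image_add_two_mul h0 hA hM, card_singleton,
    card_image_of_injective _ (add_left_injective _)] at hunion
  have hA1 : 1 ≤ #A := card_pos.mpr ⟨0, h0⟩
  rw [insert_add_insert_self_s7, card_insert_of_notMem hnew]
  omega

end DoublingStep

/-- The iterates `D^j A` of `D X = X ∪ {2 max X}`, with `M = max A` passed explicitly. -/
def doublingChain (A : Finset ℤ) (M : ℤ) : ℕ → Finset ℤ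
  | 0 => A
  | j + 1 => insert (2 ^ (j + 1) * M) (doublingChain A M j)

section DoublingChain

variable {A : Finset ℤ} {M : ℤ}

theorem subset_doublingChain (j : ℕ) : A ⊆ doublingChain A M j := by
  induction j with
  | zero => exact subset_rfl
  | succ j ih => exact ih.trans (subset_insert _ _)

theorem isGreatest_doublingChain (hM : IsGreatest (A : Set ℤ) M) (hM0 : 0 ≤ M) (j : ℕ) :
    IsGreatest (doublingChain A M j : Set ℤ) (2 ^ j * M) := by
  induction j with
  | zero => simpa [doublingChain] using hM
  | succ j ih =>
    refine ⟨mem_insert_self _ _, fun x hx ↦ ?_⟩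
    rcases mem_insert.mp hx with rfl | hx
    · exact le_rfl
    · refine (ih.2 hx).trans ?_
      rw [pow_succ, mul_assoc]
      exact mul_le_mul_of_nonneg_left (by linarith) (by positivity)

theorem nonneg_of_mem_doublingChain (hA : ∀ x ∈ A, 0 ≤ x) (hM0 : 0 ≤ M) {j : ℕ} {x : ℤ}
    (hx : x ∈ doublingChain A M j) : 0 ≤ x := by
  induction j with
  | zero => exact hA x hx
  | succ j ih =>
    rcases mem_insert.mp hx with rfl | hx
    · positivity
    · exact ih hx

theorem card_doublingChain (hM : IsGreatest (A : Set ℤ) M) (hM0 : 0 < M) (j : ℕ) :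
    #(doublingChain A M j) = #A + j := by
  induction j with
  | zero => rfl
  | succ j ih =>
    have hnew : 2 ^ (j + 1) * M ∉ doublingChain A M j := fun h ↦ by
      rw [pow_succ] at h
      linarith [(isGreatest_doublingChain hM hM0.le j).2 h, mul_pos (pow_pos two_pos j) hM0]
    rw [doublingChain, card_insert_of_notMem hnew, ih, add_assoc]

theorem card_add_self_doublingChain (h0 : 0 ∈ A) (hA : ∀ x ∈ A, 0 ≤ x)
    (hM : IsGreatest (A : Set ℤ) M) (hM0 : 0 < M) (j : ℕ) :
    #(doublingChain A M j + doublingChain A M j) = #(A + A) + j * #A + j.choose 2 := by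
  induction j with
  | zero => simp [doublingChain]
  | succ j ih =>
    have hstep := card_add_self_insert_two_mul (subset_doublingChain j h0)
      (fun x hx ↦ nonneg_of_mem_doublingChain hA hM0.le hx)
      (isGreatest_doublingChain hM hM0.le j) (by positivity)
    rw [doublingChain, show 2 ^ (j + 1) * M = 2 * (2 ^ j * M) by ring, hstep, ih,
      card_doublingChain hM hM0, Nat.choose_succ_succ, Nat.choose_one_right]
    ring

end DoublingChain

theorem Int.Ico_add_Ico {a b c d : ℤ} (hab : a < b) (hcd : c < d) :
    Ico a b + Ico c d = Ico (a + c) (b + d - 1) := by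
  ext t
  simp only [mem_add, mem_Ico]
  constructor
  · rintro ⟨y, hy, z, hz, rfl⟩
    omega
  · intro ht
    exact ⟨min (b - 1) (t - c), by omega, t - min (b - 1) (t - c), by omega, by omega⟩

noncomputable def baseSet (s b : ℕ) : Finset ℤ := insert ((s + b : ℕ) : ℤ) (Ico 0 (s : ℤ))

section BaseSet

variable {s b : ℕ}

theorem isGreatest_baseSet : IsGreatest (baseSet s b : Set ℤ) ((s + b : ℕ) : ℤ) := by
  refine ⟨mem_insert_self _ _, fun x hx ↦ ?_⟩
  rcases mem_insert.mp hx with rfl | hx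
  · exact le_rfl
  · have := (mem_Ico.mp hx).2
    omega

theorem nonneg_of_mem_baseSet {x : ℤ} (hx : x ∈ baseSet s b) : 0 ≤ x := by
  rcases mem_insert.mp hx with rfl | hx
  · positivity
  · exact (mem_Ico.mp hx).1

theorem mem_baseSet_of_lt {x : ℤ} (hx0 : 0 ≤ x) (hxs : x < s) : x ∈ baseSet s b :=
  mem_insert_of_mem (mem_Ico.mpr ⟨hx0, hxs⟩)

theorem card_baseSet : #(baseSet s b) = s + 1 := by
  rw [baseSet, card_insert_of_notMem (by simp), Int.card_Ico, sub_zero, Int.toNat_natCast]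

theorem baseSet_add_self (hbs : b + 2 ≤ s) :
    baseSet s b + baseSet s b = insert (2 * ((s + b : ℕ) : ℤ)) (Ico 0 ((2 * s + b : ℕ) : ℤ)) := by
  rw [baseSet, insert_add_insert_self_s7, Int.Ico_add_Ico (by omega) (by omega),
    image_add_right_Ico, Ico_union_Ico' (by omega) (by omega), two_mul]
  congr 2
  omega

theorem card_add_self_baseSet (hbs : b + 2 ≤ s) : #(baseSet s b + baseSet s b) = 2 * s + b + 1 := by
  rw [baseSet_add_self hbs, card_insert_of_notMem (by simp; omega), Int.card_Ico, sub_zero,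
    Int.toNat_natCast]

end BaseSet

theorem Nat.two_mul_choose_two_add_self (n : ℕ) : 2 * n.choose 2 + n = n * n := by
  induction n with
  | zero => rfl
  | succ n ih =>
    rw [Nat.choose_succ_succ, Nat.choose_one_right]
    linarith

theorem mul_sub_choose_succ_two_eq {k c : ℕ} (b : ℕ) (hc : 2 ≤ c) (hck : c + 1 ≤ k) :
    c * k - (c + 1).choose 2 + b + 2 =
      2 * (k - c + 1) + b + 1 + (c - 2) * (k - c + 2) + (c - 2).choose 2 := by
  obtain ⟨j, rfl⟩ := Nat.exists_eq_add_of_le' hc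
  obtain ⟨s, rfl⟩ := Nat.exists_eq_add_of_le' hck
  have hchoose : (j + 2 + 1).choose 2 = j.choose 2 + 3 * j + 3 := by
    simp only [Nat.choose_succ_succ, Nat.choose_one_right, Nat.choose_zero_right]
    ring
  have := Nat.two_mul_choose_two_add_self j
  rw [hchoose, Nat.add_sub_cancel, show s + (j + 2 + 1) - (j + 2) = s + 1 by omega]
  zify [show j.choose 2 + 3 * j + 3 ≤ (j + 2) * (s + (j + 2 + 1)) by nlinarith] at this ⊢
  linear_combination (-1 : ℤ) * this

theorem exists_extremal_set_with_max_mu_general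
    (k T c b : ℕ) (hk : 4 ≤ k)
    (hcb : (2 ≤ c ∧ c ≤ k - 2 ∧ 1 ≤ b ∧ b ≤ k - c - 1) ∨ (c = 2 ∧ b = 0))
    (hTcb : T = c * k - (c + 1).choose 2 + b + 2) :
    ∃ A : Finset ℤ, 0 ∈ A ∧ (∀ y ∈ A, 0 ≤ y) ∧ A.gcd id = 1 ∧
      A.card = k ∧ (A + A).card = T ∧
      IsGreatest (A : Set ℤ) ((2 ^ (c - 2) * (k - c + b + 1) : ℕ) : ℤ) := by
  have hc : 2 ≤ c := by omega
  have hbck : b + c + 1 ≤ k := by omega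
  set s := k - c + 1 with hs
  have hbs : b + 2 ≤ s := by omega
  have hB := isGreatest_baseSet (s := s) (b := b)
  have hB0 : 0 < ((s + b : ℕ) : ℤ) := by positivity
  have hmem : ∀ {x : ℤ}, 0 ≤ x → x < s → x ∈ doublingChain (baseSet s b) (s + b : ℕ) (c - 2) :=
    fun hx0 hxs ↦ subset_doublingChain _ (mem_baseSet_of_lt hx0 hxs)
  refine ⟨doublingChain (baseSet s b) (s + b : ℕ) (c - 2), hmem le_rfl (by omega),
    fun y hy ↦ nonneg_of_mem_doublingChain (fun x ↦ nonneg_of_mem_baseSet) hB0.le hy,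
    gcd_id_eq_one_of_one_mem (hmem zero_le_one (by omega)), ?_, ?_, ?_⟩
  · rw [card_doublingChain hB hB0, card_baseSet]
    omega
  · rw [card_add_self_doublingChain (mem_baseSet_of_lt le_rfl (by omega))
      (fun x ↦ nonneg_of_mem_baseSet) hB hB0, card_add_self_baseSet hbs, card_baseSet, hTcb,
      mul_sub_choose_succ_two_eq b hc (by omega)]
  · rw [show k - c + b + 1 = s + b by omega]
    exact_mod_cast isGreatest_doublingChain hB hB0.le (c - 2)

/-- For each `k ≥ 4` and `T ∈ [2k−1, C(k,2)+2]` (with `c = c(k,T)`,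
`b = b(k,T)` given by the canonical parametrization of `T`), there is a set `A` of
integers in normal form with `|A| = k`, `|2A| = T` and `max A = μ(k,T) =
2^(c−2)(k−c+b+1)`. -/
theorem exists_extremal_set_with_max_mu
    (k T c b : ℕ) (hk : 4 ≤ k) (hT1 : 2 * k - 1 ≤ T) (hT2 : T ≤ k.choose 2 + 2)
    (hcb : (2 ≤ c ∧ c ≤ k - 2 ∧ 1 ≤ b ∧ b ≤ k - c - 1) ∨ (c = 2 ∧ b = 0))
    (hTcb : T = c * k - (c + 1).choose 2 + b + 2) :
    ∃ A : Finset ℤ, 0 ∈ A ∧ (∀ y ∈ A, 0 ≤ y) ∧ A.gcd id = 1 ∧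
      A.card = k ∧ (A + A).card = T ∧
      IsGreatest (A : Set ℤ) ((2 ^ (c - 2) * (k - c + b + 1) : ℕ) : ℤ) :=
  exists_extremal_set_with_max_mu_general k T c b hk hcb hTcb
end

section
/- For each k ≥ 4 and each b with 1 ≤ b ≤ k−3, the set A = {0} ∪ [b+1, k+b−1] (the integers from b+1 to k+b−1 together with 0) satisfies |A| = k and |2A| = 2k−1+b. -/
open Finset Pointwise

theorem Finset.insert_zero_add_insert_zero {α : Type*} [AddMonoid α] [DecidableEq α]
    (s : Finset α) : insert 0 s + insert 0 s = insert 0 (s ∪ (s + s)) := by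
  simp only [insert_eq, singleton_zero, union_add, add_union, zero_add, add_zero]
  rw [union_assoc, ← union_assoc s s, union_self]

theorem Finset.Icc_add_Icc {α : Type*} [AddCommMonoid α] [LinearOrder α] [IsOrderedAddMonoid α]
    [AddLeftReflectLE α] [ExistsAddOfLE α] [LocallyFiniteOrder α] [DecidableEq α]
    {a b c d : α} (hab : a ≤ b) (hcd : c ≤ d) : Icc a b + Icc c d = Icc (a + c) (b + d) :=
  coe_injective <| by simpa using Set.Icc_add_Icc hab hcd

theorem Int.Icc_union_Icc_of_le_add_one {a b c d : ℤ} (hac : a ≤ c) (hcb : c ≤ b + 1)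
    (hbd : b ≤ d) : Icc a b ∪ Icc c d = Icc a d := by
  ext x
  simp only [mem_union, mem_Icc]
  omega

/-- The sumset of `{0} ∪ [m, n]` has no gap as soon as `[m, n]` and `[2m, 2n]` overlap or touch. -/
theorem Int.insert_zero_Icc_add_self {m n : ℤ} (hm : 0 < m) (hmn : 2 * m ≤ n + 1) :
    insert 0 (Icc m n) + insert 0 (Icc m n) = insert 0 (Icc m (2 * n)) := by
  rw [insert_zero_add_insert_zero, Icc_add_Icc (by omega) (by omega), ← two_mul, ← two_mul,
    Int.Icc_union_Icc_of_le_add_one (by omega) hmn (by omega)]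

theorem Int.card_insert_zero_Icc {m n : ℤ} (hm : 0 < m) (hmn : m ≤ n + 1) :
    ((insert 0 (Icc m n)).card : ℤ) = n - m + 2 := by
  rw [card_insert_of_notMem (by simp; omega), Int.card_Icc]
  omega

theorem extremal_example_card_and_doubling_general
    (k b : ℤ) (hb1 : 1 ≤ b) (hb2 : b ≤ k - 3) :
    (((insert (0 : ℤ) (Finset.Icc (b + 1) (k + b - 1))).card : ℤ) = k) ∧
      ((((insert (0 : ℤ) (Finset.Icc (b + 1) (k + b - 1)))
          + (insert (0 : ℤ) (Finset.Icc (b + 1) (k + b - 1)))).card : ℤ)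
        = 2 * k - 1 + b) := by
  constructor
  · rw [Int.card_insert_zero_Icc (by omega) (by omega)]
    ring
  · rw [Int.insert_zero_Icc_add_self (by omega) (by omega),
      Int.card_insert_zero_Icc (by omega) (by omega)]
    ring

/-- For `1 ≤ b ≤ k−3` the set `A = {0} ∪ [b+1, k+b−1]` satisfies
`|A| = k` and `|2A| = 2k−1+b`. -/
theorem extremal_example_card_and_doubling
    (k b : ℤ) (hk : 4 ≤ k) (hb1 : 1 ≤ b) (hb2 : b ≤ k - 3) :
    (((insert (0 : ℤ) (Finset.Icc (b + 1) (k + b - 1))).card : ℤ) = k) ∧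
      ((((insert (0 : ℤ) (Finset.Icc (b + 1) (k + b - 1)))
          + (insert (0 : ℤ) (Finset.Icc (b + 1) (k + b - 1)))).card : ℤ)
        = 2 * k - 1 + b) :=
  extremal_example_card_and_doubling_general k b hb1 hb2
end

section
/- Let A = A_1 ∘ P ∘ A_2 be a finite set of integers in normal form, where A_1 is stable, A_2 is right stable (its reflexion is stable), and P is a segment (interval of consecutive integers) with |P| ≥ 3. Let a = max(A), a_1 = max(A_1), a_2 = max(A_2). Then 2A = A_1 ∘ Y ∘ A_2 for some set Y; i.e., 2A ∩ [0, a_1] = A_1 and 2A ∩ [2a − a_2, 2a] = (2a − a_2) + A_2. -/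
open Finset Pointwise

/-- A finite set `X` of nonnegative integers with `0 ∈ X` is *stable* if
`2X ∩ [0, max X] = X` and neither `1` nor `max X − 1` belongs to `X`. -/
def IsStable (X : Finset ℤ) : Prop :=
  0 ∈ X ∧ (∀ x ∈ X, 0 ≤ x) ∧
    ∃ M : ℤ, IsGreatest (X : Set ℤ) M ∧
      (X + X) ∩ Finset.Icc 0 M = X ∧ (1 : ℤ) ∉ X ∧ M - 1 ∉ X

/-- `X` is *right stable* if its reflexion `−X + max X` is stable. -/
def IsRightStable (X : Finset ℤ) : Prop :=
  ∃ M : ℤ, IsGreatest (X : Set ℤ) M ∧ IsStable (X.image (fun t => M - t))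

/-!
Sums of nonnegative elements are at least each summand, so the part of `2A` in `[0, a₁]` only
sees `A ∩ [0, a₁] = A₁`, and stability of `A₁` says exactly that this part is `A₁`.
Symmetrically, the part of `2A` in `[2a − a₂, 2a]` only sees the top block `a − a₂ + A₂`, and
right stability of `A₂` is stability of its reflexion, read back through `t ↦ a₂ − t`.
-/

section Window

variable {A : Finset ℤ}

theorem add_inter_Icc_zero_eq (hA : ∀ x ∈ A, 0 ≤ x) (m : ℤ) :
    (A + A) ∩ Icc 0 m = (A ∩ Icc 0 m + A ∩ Icc 0 m) ∩ Icc 0 m := by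
  refine subset_antisymm ?_ (inter_subset_inter_right (add_subset_add inter_subset_left
    inter_subset_left))
  intro z hz
  obtain ⟨hz, hzm⟩ := mem_inter.1 hz
  obtain ⟨x, hx, y, hy, rfl⟩ := mem_add.1 hz
  have := hA x hx
  have := hA y hy
  rw [mem_Icc] at hzm
  exact mem_inter.2 ⟨add_mem_add (mem_inter.2 ⟨hx, mem_Icc.2 ⟨by omega, by omega⟩⟩)
    (mem_inter.2 ⟨hy, mem_Icc.2 ⟨by omega, by omega⟩⟩), mem_Icc.2 hzm⟩

theorem add_inter_Icc_top_eq {M : ℤ} (hA : ∀ x ∈ A, x ≤ M) (m : ℤ) :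
    (A + A) ∩ Icc (2 * M - m) (2 * M) =
      (A ∩ Icc (M - m) M + A ∩ Icc (M - m) M) ∩ Icc (2 * M - m) (2 * M) := by
  refine subset_antisymm ?_ (inter_subset_inter_right (add_subset_add inter_subset_left
    inter_subset_left))
  intro z hz
  obtain ⟨hz, hzm⟩ := mem_inter.1 hz
  obtain ⟨x, hx, y, hy, rfl⟩ := mem_add.1 hz
  have := hA x hx
  have := hA y hy
  rw [mem_Icc] at hzm
  exact mem_inter.2 ⟨add_mem_add (mem_inter.2 ⟨hx, mem_Icc.2 ⟨by omega, by omega⟩⟩)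
    (mem_inter.2 ⟨hy, mem_Icc.2 ⟨by omega, by omega⟩⟩), mem_Icc.2 hzm⟩

end Window

theorem IsStable.add_inter_Icc {X : Finset ℤ} {M : ℤ} (hX : IsStable X)
    (hM : IsGreatest (X : Set ℤ) M) : (X + X) ∩ Icc 0 M = X := by
  obtain ⟨-, -, M', hM', hstab, -⟩ := hX
  rwa [hM'.unique hM] at hstab

theorem isGreatest_image_sub {X : Finset ℤ} {M : ℤ} (h0 : 0 ∈ X) (hX : ∀ x ∈ X, 0 ≤ x) :
    IsGreatest ((X.image (fun t => M - t) : Finset ℤ) : Set ℤ) M := by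
  refine ⟨mem_image.2 ⟨0, h0, sub_zero M⟩, ?_⟩
  rintro _ hy
  obtain ⟨t, ht, rfl⟩ := mem_image.1 hy
  linarith [hX t ht]

theorem IsRightStable.add_inter_Icc {X : Finset ℤ} {M : ℤ} (hX : IsRightStable X)
    (h0 : 0 ∈ X) (hnn : ∀ x ∈ X, 0 ≤ x) (hM : IsGreatest (X : Set ℤ) M) (a : ℤ) :
    (X.image (fun t => a - M + t) + X.image (fun t => a - M + t)) ∩ Icc (2 * a - M) (2 * a) =
      X.image (fun t => 2 * a - M + t) := by
  obtain ⟨M', hM', hrefl⟩ := hX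
  rw [hM'.unique hM] at hrefl
  have hstab := hrefl.add_inter_Icc (isGreatest_image_sub h0 hnn)
  ext z
  simp only [mem_inter, mem_Icc, mem_image, mem_add]
  constructor
  · rintro ⟨⟨_, ⟨s, hs, rfl⟩, _, ⟨t, ht, rfl⟩, rfl⟩, hlo, hhi⟩
    have hsum : (M - s) + (M - t) ∈ (X.image (fun t => M - t) + X.image (fun t => M - t)) ∩
        Icc 0 M :=
      mem_inter.2 ⟨add_mem_add (mem_image_of_mem _ hs) (mem_image_of_mem _ ht),
        mem_Icc.2 ⟨by linarith [hM.2 hs, hM.2 ht], by linarith⟩⟩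
    rw [hstab] at hsum
    obtain ⟨u, hu, hue⟩ := mem_image.1 hsum
    exact ⟨u, hu, by linarith⟩
  · rintro ⟨u, hu, rfl⟩
    have := hM.2 hu
    have := hnn u hu
    exact ⟨⟨_, ⟨M, hM.1, rfl⟩, _, ⟨u, hu, rfl⟩, by ring⟩, by linarith, by linarith⟩

/-- `A₁ ∘ [0, p] ∘ A₂`, where `a₁` is to be `max A₁`. -/
noncomputable def concatSegment (A₁ : Finset ℤ) (a₁ p : ℤ) (A₂ : Finset ℤ) : Finset ℤ :=
  A₁ ∪ Icc a₁ (a₁ + p) ∪ A₂.image (fun t => a₁ + p + t)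

section ConcatSegment

variable {A₁ A₂ : Finset ℤ} {a₁ a₂ p x : ℤ}

theorem mem_concatSegment : x ∈ concatSegment A₁ a₁ p A₂ ↔
    x ∈ A₁ ∨ (a₁ ≤ x ∧ x ≤ a₁ + p) ∨ ∃ t ∈ A₂, a₁ + p + t = x := by
  simp only [concatSegment, mem_union, mem_Icc, mem_image, or_assoc]

theorem concatSegment_nonneg (hnn₁ : ∀ x ∈ A₁, 0 ≤ x) (hnn₂ : ∀ x ∈ A₂, 0 ≤ x)
    (ha₁ : a₁ ∈ A₁) (hp : 0 ≤ p) : ∀ x ∈ concatSegment A₁ a₁ p A₂, 0 ≤ x := by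
  have := hnn₁ a₁ ha₁
  intro x hx
  rcases mem_concatSegment.1 hx with hx | ⟨hx, -⟩ | ⟨t, ht, rfl⟩
  · exact hnn₁ x hx
  · omega
  · linarith [hnn₂ t ht]

theorem concatSegment_le (ha₁ : IsGreatest (A₁ : Set ℤ) a₁) (ha₂ : IsGreatest (A₂ : Set ℤ) a₂)
    (hnn₂ : ∀ x ∈ A₂, 0 ≤ x) (hp : 0 ≤ p) :
    ∀ x ∈ concatSegment A₁ a₁ p A₂, x ≤ a₁ + p + a₂ := by
  have := hnn₂ a₂ ha₂.1
  intro x hx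
  rcases mem_concatSegment.1 hx with hx | ⟨-, hx⟩ | ⟨t, ht, rfl⟩
  · linarith [ha₁.2 hx]
  · omega
  · linarith [ha₂.2 ht]

theorem concatSegment_inter_Icc_zero (ha₁ : IsGreatest (A₁ : Set ℤ) a₁)
    (hnn₁ : ∀ x ∈ A₁, 0 ≤ x) (hnn₂ : ∀ x ∈ A₂, 0 ≤ x) (hp : 0 < p) :
    concatSegment A₁ a₁ p A₂ ∩ Icc 0 a₁ = A₁ := by
  ext x
  rw [mem_inter, mem_concatSegment, mem_Icc]
  constructor
  · rintro ⟨hx | ⟨hx, -⟩ | ⟨t, ht, rfl⟩, -, hxa⟩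
    · exact hx
    · rw [le_antisymm hxa hx]
      exact ha₁.1
    · linarith [hnn₂ t ht]
  · intro hx
    exact ⟨Or.inl hx, hnn₁ x hx, ha₁.2 hx⟩

theorem concatSegment_inter_Icc_top (ha₁ : IsGreatest (A₁ : Set ℤ) a₁)
    (ha₂ : IsGreatest (A₂ : Set ℤ) a₂) (h0₂ : 0 ∈ A₂) (hnn₂ : ∀ x ∈ A₂, 0 ≤ x) (hp : 0 < p) :
    concatSegment A₁ a₁ p A₂ ∩ Icc (a₁ + p + a₂ - a₂) (a₁ + p + a₂) =
      A₂.image (fun t => a₁ + p + a₂ - a₂ + t) := by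
  ext x
  simp only [mem_inter, mem_concatSegment, mem_Icc, mem_image, add_sub_cancel_right]
  constructor
  · rintro ⟨hx | ⟨-, hx⟩ | htx, hlo, -⟩
    · linarith [ha₁.2 hx]
    · exact ⟨0, h0₂, by omega⟩
    · exact htx
  · rintro ⟨t, ht, rfl⟩
    exact ⟨Or.inr (Or.inr ⟨t, ht, rfl⟩), by linarith [hnn₂ t ht], by linarith [ha₂.2 ht]⟩

end ConcatSegment

theorem sumset_of_stable_decomposition_general
    (A₁ A₂ : Finset ℤ) (p a₁ a₂ : ℤ)
    (hs1 : IsStable A₁) (hs2 : IsRightStable A₂)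
    (h0₂ : 0 ∈ A₂) (hnn₂ : ∀ x ∈ A₂, 0 ≤ x)
    (ha₁ : IsGreatest (A₁ : Set ℤ) a₁) (ha₂ : IsGreatest (A₂ : Set ℤ) a₂)
    (hp : 2 ≤ p)
    (A : Finset ℤ)
    (hA : A = A₁ ∪ Finset.Icc a₁ (a₁ + p) ∪ A₂.image (fun t => a₁ + p + t)) :
    (A + A) ∩ Finset.Icc 0 a₁ = A₁ ∧
      (A + A) ∩ Finset.Icc (2 * (a₁ + p + a₂) - a₂) (2 * (a₁ + p + a₂))
        = A₂.image (fun t => 2 * (a₁ + p + a₂) - a₂ + t) := by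
  replace hA : A = concatSegment A₁ a₁ p A₂ := hA
  subst hA
  have hnn₁ := hs1.2.1
  constructor
  · rw [add_inter_Icc_zero_eq (concatSegment_nonneg hnn₁ hnn₂ ha₁.1 (by omega)),
      concatSegment_inter_Icc_zero ha₁ hnn₁ hnn₂ (by omega)]
    exact hs1.add_inter_Icc ha₁
  · rw [add_inter_Icc_top_eq (concatSegment_le ha₁ ha₂ hnn₂ (by omega)),
      concatSegment_inter_Icc_top ha₁ ha₂ h0₂ hnn₂ (by omega)]
    exact hs2.add_inter_Icc h0₂ hnn₂ ha₂ _

/-- If `A = A₁ ∘ P ∘ A₂` is in normal form with `A₁` stable,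
`A₂` right stable and `P` a segment with `|P| ≥ 3`, then `2A = A₁ ∘ Y ∘ A₂` for
some set `Y`; i.e. `2A ∩ [0, a₁] = A₁` and `2A ∩ [2a − a₂, 2a] = (2a − a₂) + A₂`,
where `a = max A`, `a₁ = max A₁`, `a₂ = max A₂`. -/
theorem sumset_of_stable_decomposition
    (A₁ A₂ : Finset ℤ) (p a₁ a₂ : ℤ)
    (hs1 : IsStable A₁) (hs2 : IsRightStable A₂)
    (h0₂ : 0 ∈ A₂) (hnn₂ : ∀ x ∈ A₂, 0 ≤ x)
    (ha₁ : IsGreatest (A₁ : Set ℤ) a₁) (ha₂ : IsGreatest (A₂ : Set ℤ) a₂)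
    (hp : 2 ≤ p)
    (A : Finset ℤ)
    (hA : A = A₁ ∪ Finset.Icc a₁ (a₁ + p) ∪ A₂.image (fun t => a₁ + p + t))
    (hgcd : A.gcd id = 1) :
    (A + A) ∩ Finset.Icc 0 a₁ = A₁ ∧
      (A + A) ∩ Finset.Icc (2 * (a₁ + p + a₂) - a₂) (2 * (a₁ + p + a₂))
        = A₂.image (fun t => 2 * (a₁ + p + a₂) - a₂ + t) :=
  sumset_of_stable_decomposition_general A₁ A₂ p a₁ a₂ hs1 hs2 h0₂ hnn₂ ha₁ ha₂ hp A hA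
end

section
/- Let A ⊂ ℤ be a finite set in normal form with one-dimensional additive dimension, and let x > max(A). Then A ∪ {x} is one-dimensional if and only if x ∈ 2A − A. -/
open Finset Pointwise

/-- `φ` is a Freiman isomorphism from `A` onto `B`. -/
def IsFreimanIso {G G' : Type*} [AddCommGroup G] [AddCommGroup G']
    (A : Finset G) (B : Finset G') (φ : G → G') : Prop :=
  Set.BijOn φ (A : Set G) (B : Set G') ∧
    ∀ x ∈ A, ∀ y ∈ A, ∀ z ∈ A, ∀ t ∈ A,
      (x + y = z + t ↔ φ x + φ y = φ z + φ t)

/-- `B ⊆ ℤ^d` is not contained in a hyperplane: no nonzero linear functional is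
constant on `B`. -/
def NotInHyperplane {d : ℕ} (B : Finset (Fin d → ℤ)) : Prop :=
  ∀ (f : (Fin d → ℤ) →+ ℤ) (c : ℤ), (∀ b ∈ B, f b = c) → f = 0

/-- `A` admits a witness of additive dimension `d`. -/
def HasAddDimWitness (A : Finset ℤ) (d : ℕ) : Prop :=
  ∃ B : Finset (Fin d → ℤ), NotInHyperplane B ∧
    ∃ φ : ℤ → (Fin d → ℤ), IsFreimanIso A B φ

/-- The additive dimension of `A` is `d`. -/
def AddDim (A : Finset ℤ) (d : ℕ) : Prop :=
  HasAddDimWitness A d ∧ ∀ e : ℕ, HasAddDimWitness A e → e ≤ d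

/-!
A set of integers has a one-dimensional witness exactly when it has two distinct points.
If `x = a + a' - a''`, every Freiman isomorphism of `A ∪ {x}` sends `x` into the affine hull of
the image of `A`, so each witness for `A ∪ {x}` restricts to a witness for `A` of the same
dimension. If `x ∉ 2A - A`, then, as `x > max A`, both sides of every additive quadruple in
`A ∪ {x}` contain `x` equally often, so `v ↦ (v, [v = x])` is a Freiman isomorphism onto a set
spanning `ℤ²`.
-/

lemma AddMonoidHom.map_single_int {ι : Type*} [DecidableEq ι] (f : (ι → ℤ) →+ ℤ) (i : ι) (n : ℤ) :
    f (Pi.single i n) = n * f (Pi.single i 1) := by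
  rw [← smul_eq_mul, ← map_zsmul, ← Pi.single_smul, smul_eq_mul, mul_one]

lemma AddMonoidHom.map_vecCons_int (f : (Fin 2 → ℤ) →+ ℤ) (p q : ℤ) :
    f ![p, q] = p * f (Pi.single 0 1) + q * f (Pi.single 1 1) := by
  have : ![p, q] = Pi.single 0 p + Pi.single 1 q := by
    funext i
    fin_cases i <;> simp
  rw [this, map_add, f.map_single_int 0 p, f.map_single_int 1 q]

lemma NotInHyperplane.exists_ne {d : ℕ} {B : Finset (Fin d → ℤ)} (hB : NotInHyperplane B)
    (hd : 0 < d) : ∃ b ∈ B, ∃ b' ∈ B, b ≠ b' := by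
  by_contra! hconst
  let f : (Fin d → ℤ) →+ ℤ := Pi.evalAddMonoidHom (fun _ => ℤ) ⟨0, hd⟩
  obtain ⟨c, hc⟩ : ∃ c, ∀ b ∈ B, f b = c := by
    rcases B.eq_empty_or_nonempty with rfl | ⟨b₀, hb₀⟩
    · simp
    · exact ⟨f b₀, fun b hb => by rw [hconst b hb b₀ hb₀]⟩
  simpa [f] using DFunLike.congr_fun (hB f c hc) (Pi.single ⟨0, hd⟩ 1)

lemma HasAddDimWitness.exists_ne {S : Finset ℤ} {d : ℕ} (h : HasAddDimWitness S d) (hd : 0 < d) :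
    ∃ a ∈ S, ∃ a' ∈ S, a ≠ a' := by
  obtain ⟨B, hB, φ, hφ, -⟩ := h
  obtain ⟨b, hb, b', hb', hne⟩ := hB.exists_ne hd
  obtain ⟨a, ha, rfl⟩ := hφ.surjOn hb
  obtain ⟨a', ha', rfl⟩ := hφ.surjOn hb'
  exact ⟨a, ha, a', ha', ne_of_apply_ne φ hne⟩

lemma isFreimanIso_image {G G' : Type*} [AddCommGroup G] [AddCommGroup G'] [DecidableEq G']
    {S : Finset G} {φ : G → G'} (hφ : Set.InjOn φ S)
    (hadd : ∀ x ∈ S, ∀ y ∈ S, ∀ z ∈ S, ∀ t ∈ S, (x + y = z + t ↔ φ x + φ y = φ z + φ t)) :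
    IsFreimanIso S (S.image φ) φ :=
  ⟨by rw [coe_image]; exact hφ.bijOn_image, hadd⟩

lemma hasAddDimWitness_one_of_ne {S : Finset ℤ} {a b : ℤ} (ha : a ∈ S) (hb : b ∈ S) (hab : a ≠ b) :
    HasAddDimWitness S 1 := by
  let φ : ℤ → Fin 1 → ℤ := fun v => Pi.single 0 v
  refine ⟨S.image φ, ?_, φ,
    isFreimanIso_image (fun u _ v _ h => Pi.single_injective 0 h) fun u _ v _ w _ t _ => ?_⟩
  · intro f c hf
    have hk : f (Pi.single 0 1) = 0 := by
      by_contra hk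
      refine hab (mul_right_cancel₀ hk ?_)
      rw [← f.map_single_int, ← f.map_single_int, hf _ (mem_image_of_mem _ ha),
        hf _ (mem_image_of_mem _ hb)]
    ext i
    rwa [Subsingleton.elim i 0]
  · rw [← Pi.single_add, ← Pi.single_add, (Pi.single_injective 0).eq_iff]

lemma HasAddDimWitness.of_insert_add_sub {A : Finset ℤ} {a a' a'' : ℤ} {d : ℕ} (ha : a ∈ A)
    (ha' : a' ∈ A) (ha'' : a'' ∈ A) (h : HasAddDimWitness (insert (a + a' - a'') A) d) :
    HasAddDimWitness A d := by
  obtain ⟨B, hB, φ, hφ, hadd⟩ := h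
  refine ⟨A.image φ, fun f c hf => hB f c fun b hb => ?_, φ,
    isFreimanIso_image (hφ.injOn.mono (by simp)) fun u hu v hv w hw t ht =>
      hadd u (mem_insert_of_mem hu) v (mem_insert_of_mem hv) w (mem_insert_of_mem hw) t
        (mem_insert_of_mem ht)⟩
  have hfA : ∀ v ∈ A, f (φ v) = c := fun v hv => hf _ (mem_image_of_mem φ hv)
  obtain ⟨v, hv, rfl⟩ := hφ.surjOn hb
  rcases mem_insert.1 hv with rfl | hv
  · have hrel := (hadd _ (mem_insert_self _ _) a'' (mem_insert_of_mem ha'') a (mem_insert_of_mem ha)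
      a' (mem_insert_of_mem ha')).1 (by ring)
    have := congrArg f hrel
    rw [map_add, map_add, hfA a ha, hfA a' ha', hfA a'' ha''] at this
    linarith
  · exact hfA v hv

def indicatorAt (x v : ℤ) : ℤ := if v = x then 1 else 0

section NewPoint

variable {A : Finset ℤ} {x : ℤ}

lemma eq_or_eq_of_add_eq_of_forall_ne_add_sub (hx : ∀ a ∈ A, a < x)
    (hno : ∀ a ∈ A, ∀ a' ∈ A, ∀ a'' ∈ A, x ≠ a + a' - a'') {v w s : ℤ} (hv : v ∈ insert x A)
    (hw : w ∈ insert x A) (hs : s ∈ insert x A) (h : x + v = w + s) : w = x ∨ s = x := by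
  by_contra! hws
  have hwA := mem_of_mem_insert_of_ne hw hws.1
  have hsA := mem_of_mem_insert_of_ne hs hws.2
  rcases mem_insert.1 hv with rfl | hvA
  · linarith [hx w hwA, hx s hsA]
  · exact hno w hwA s hsA v hvA (by linarith)

lemma indicatorAt_add_eq_of_add_eq (hx : ∀ a ∈ A, a < x)
    (hno : ∀ a ∈ A, ∀ a' ∈ A, ∀ a'' ∈ A, x ≠ a + a' - a'') {u v w s : ℤ} (hu : u ∈ insert x A)
    (hv : v ∈ insert x A) (hw : w ∈ insert x A) (hs : s ∈ insert x A) (h : u + v = w + s) :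
    indicatorAt x u + indicatorAt x v = indicatorAt x w + indicatorAt x s := by
  have key := @eq_or_eq_of_add_eq_of_forall_ne_add_sub A x hx hno
  wlog hux : u = x generalizing u v w s
  · by_cases hvx : v = x
    · simpa only [add_comm] using this hv hu hw hs (by linarith) hvx
    have hwx : w ≠ x := by
      rintro rfl
      exact (key hs hu hv h.symm).elim hux hvx
    have hsx : s ≠ x := by
      rintro rfl
      exact (key hw hu hv (by linarith)).elim hux hvx
    simp [indicatorAt, hux, hvx, hwx, hsx]
  subst hux
  rcases key hv hw hs h with rfl | rfl
  · rw [add_left_cancel h]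
  · rw [add_left_cancel (h.trans (add_comm _ _)), add_comm]

lemma hasAddDimWitness_two_insert (hx : ∀ a ∈ A, a < x)
    (hno : ∀ a ∈ A, ∀ a' ∈ A, ∀ a'' ∈ A, x ≠ a + a' - a'') {a b : ℤ} (ha : a ∈ A) (hb : b ∈ A)
    (hab : a ≠ b) : HasAddDimWitness (insert x A) 2 := by
  let φ : ℤ → Fin 2 → ℤ := fun v => ![v, indicatorAt x v]
  refine ⟨(insert x A).image φ, ?_, φ, isFreimanIso_image (fun u _ v _ h => congrFun h 0)
    fun u hu v hv w hw s hs => ?_⟩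
  · intro f c hf
    have hfA : ∀ v ∈ A, v * f (Pi.single 0 1) = c := fun v hv => by
      simpa [φ, f.map_vecCons_int, indicatorAt, (hx v hv).ne] using
        hf _ (mem_image_of_mem φ (mem_insert_of_mem hv))
    have hfx : x * f (Pi.single 0 1) + f (Pi.single 1 1) = c := by
      simpa [φ, f.map_vecCons_int, indicatorAt] using
        hf _ (mem_image_of_mem φ (mem_insert_self x A))
    have h0 : f (Pi.single 0 1) = 0 :=
      by_contra fun hk => hab (mul_right_cancel₀ hk ((hfA a ha).trans (hfA b hb).symm))
    have h1 : f (Pi.single 1 1) = 0 := by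
      simp only [h0, mul_zero, zero_add] at hfx hfA
      rw [hfx, ← hfA a ha]
    ext i
    fin_cases i
    exacts [h0, h1]
  · simp only [φ, Matrix.cons_add_cons, Matrix.vecCons_inj, Matrix.empty_add_empty, and_true]
    exact ⟨fun h => ⟨h, indicatorAt_add_eq_of_add_eq hx hno hu hv hw hs h⟩, And.left⟩

end NewPoint

theorem one_dim_extension_iff_general
    (A : Finset ℤ) (hdim : AddDim A 1) (x : ℤ) (hx : ∀ a ∈ A, a < x) :
    AddDim (insert x A) 1 ↔ ∃ a ∈ A, ∃ a' ∈ A, ∃ a'' ∈ A, x = a + a' - a'' := by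
  constructor
  · intro hdim'
    by_contra! hno
    obtain ⟨a, ha, b, hb, hab⟩ := hdim.1.exists_ne one_pos
    have := hdim'.2 2 (hasAddDimWitness_two_insert hx hno ha hb hab)
    omega
  · rintro ⟨a, ha, a', ha', a'', ha'', rfl⟩
    exact ⟨hasAddDimWitness_one_of_ne (mem_insert_self _ A) (mem_insert_of_mem ha) (hx a ha).ne',
      fun e he => hdim.2 e (he.of_insert_add_sub ha ha' ha'')⟩

/-- Let `A` be a one-dimensional set in normal form and
`x > max A`. Then `A ∪ {x}` is one-dimensional if and only if `x ∈ 2A − A`. -/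
theorem one_dim_extension_iff
    (A : Finset ℤ) (h0 : 0 ∈ A) (hnn : ∀ y ∈ A, 0 ≤ y) (hgcd : A.gcd id = 1)
    (hdim : AddDim A 1) (x : ℤ) (hx : ∀ a ∈ A, a < x) :
    AddDim (insert x A) 1 ↔ ∃ a ∈ A, ∃ a' ∈ A, ∃ a'' ∈ A, x = a + a' - a'' :=
  one_dim_extension_iff_general A hdim x hx
end

section
/- Let A be a finite set of integers in normal form with a = max(A), and let B = A ∪ {2a}. For any x with 3a < x < 4a, |(x + B) ∩ 2B| ≤ 1. -/
/-!
Every element `x + b` of `x + B` exceeds `3a = 2a + a`, since `b ≥ 0`. A sum of two elements of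
`B` that involves an element of `A` is at most `a + 2a = 3a`, so the only candidate in `2B` is `4a`.
-/

open Finset Pointwise

theorem Finset.eq_add_self_of_mem_add_of_lt {α : Type*} [AddCommMonoid α] [LinearOrder α]
    [IsOrderedAddMonoid α] {B : Finset α} {m m' y : α} (hB : ∀ b ∈ B, b = m ∨ b ≤ m')
    (hm : m' ≤ m) (hy : y ∈ B + B) (hlt : m + m' < y) : y = m + m := by
  obtain ⟨c, hc, d, hd, rfl⟩ := Finset.mem_add.1 hy
  have hle : ∀ b ∈ B, b ≤ m := fun b hb => (hB b hb).elim le_of_eq (·.trans hm)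
  rcases hB c hc with rfl | hc'
  · rcases hB d hd with rfl | hd'
    · rfl
    · exact absurd (add_le_add_right hd' c) hlt.not_ge
  · exact absurd ((add_le_add hc' (hle d hd)).trans_eq (add_comm _ _)) hlt.not_ge

theorem translate_inter_doubling_small_general
    (A : Finset ℤ) (a : ℤ)
    (hnn : ∀ y ∈ A, 0 ≤ y)
    (ha : IsGreatest (A : Set ℤ) a)
    (x : ℤ) (hx1 : 3 * a < x) (hx2 : x < 4 * a) :
    (((insert (2 * a) A).image (fun b => x + b))
        ∩ ((insert (2 * a) A) + (insert (2 * a) A))).card ≤ 1 := by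
  have hB : ∀ b ∈ insert (2 * a) A, b = 2 * a ∨ (0 ≤ b ∧ b ≤ a) := by
    intro b hb
    rcases Finset.mem_insert.1 hb with rfl | hbA
    · exact Or.inl rfl
    · exact Or.inr ⟨hnn b hbA, ha.2 hbA⟩
  suffices h : ∀ y ∈ (((insert (2 * a) A).image (fun b => x + b))
      ∩ ((insert (2 * a) A) + (insert (2 * a) A))), y = 2 * a + 2 * a from
    Finset.card_le_one.2 fun y hy z hz => (h y hy).trans (h z hz).symm
  intro y hy
  obtain ⟨hyx, hyB⟩ := Finset.mem_inter.1 hy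
  obtain ⟨b, hb, rfl⟩ := Finset.mem_image.1 hyx
  have hb0 : 0 ≤ b := by rcases hB b hb with rfl | hb' <;> omega
  refine Finset.eq_add_self_of_mem_add_of_lt (m' := a) (fun c hc => ?_) (by omega) hyB (by omega)
  exact (hB c hc).imp id And.right

/-- Let `A` be in normal form with `a = max A` and
`B = A ∪ {2a}`. For any `x` with `3a < x < 4a`, `|(x + B) ∩ 2B| ≤ 1`. -/
theorem translate_inter_doubling_small
    (A : Finset ℤ) (a : ℤ)
    (h0 : 0 ∈ A) (hnn : ∀ y ∈ A, 0 ≤ y) (hgcd : A.gcd id = 1)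
    (ha : IsGreatest (A : Set ℤ) a)
    (x : ℤ) (hx1 : 3 * a < x) (hx2 : x < 4 * a) :
    (((insert (2 * a) A).image (fun b => x + b))
        ∩ ((insert (2 * a) A) + (insert (2 * a) A))).card ≤ 1 :=
  translate_inter_doubling_small_general A a hnn ha x hx1 hx2
end
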